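/- arXiv:1012.0668 — 4 statements merged into one kernel-verified Lean document; each statement's English description precedes it below -/
import Mathlib

section
/- Suppose λ satisfies weak hyperbolicity of type (n₁,n₂). Then for every nonzero z ∈ ℂ, at least one of the deleted cones z·C₁° or z·C₂° lies entirely in the open left half-plane {Re < 0} or entirely in the open right half-plane {Re > 0}. -/
/-!
Write `ω x y = Im (conj x * y)` for the oriented area form on `ℂ`. Weak hyperbolicity makes
`ω λᵢ λⱼ > 0` for `λᵢ` in the first block and `λⱼ` in the second, and bilinearity propagates this
to `ω x y > 0` for all `x ∈ C₁°`, `y ∈ C₂°`. If `Re (z ·)` took both signs (weakly) on each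
deleted cone, it would vanish at a point `v` of a segment between two points of `C₁°` and at a
point `v'` of a segment between two points of `C₂°`. Both lie on the real line `ker Re (z ·)`,
so `ω v v' = 0`; but `ω v v' > 0` because `ω` is positive on the endpoints of both segments.
-/

attribute [local instance] Complex.finrank_real_complex_fact

local notation "ω" => Complex.orientation.areaForm

lemma LinearMap.exists_mem_segment_eq_zero {E : Type*} [AddCommGroup E] [Module ℝ E]
    (f : E →ₗ[ℝ] ℝ) {a b : E} (ha : f a ≤ 0) (hb : 0 ≤ f b) :
    ∃ v ∈ segment ℝ a b, f v = 0 := by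
  suffices (0 : ℝ) ∈ f.toAffineMap '' segment ℝ a b from this
  rw [image_segment, segment_eq_uIcc]
  exact Set.mem_uIcc.2 (Or.inl ⟨ha, hb⟩)

lemma LinearMap.pos_of_mem_segment {E : Type*} [AddCommGroup E] [Module ℝ E]
    (f : E →ₗ[ℝ] ℝ) {a b v : E} (ha : 0 < f a) (hb : 0 < f b) (hv : v ∈ segment ℝ a b) :
    0 < f v :=
  (convex_halfSpace_gt f.isLinear 0).segment_subset ha hb hv

lemma LinearMap.pos_of_sum_smul_ne_zero {ι E : Type*} [AddCommGroup E] [Module ℝ E]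
    (f : E →ₗ[ℝ] ℝ) {S : Finset ι} {r : ι → ℝ} {u : ι → E} (hr : ∀ i ∈ S, 0 ≤ r i)
    (hf : ∀ i ∈ S, 0 < f (u i)) (hne : ∑ i ∈ S, r i • u i ≠ 0) :
    0 < f (∑ i ∈ S, r i • u i) := by
  obtain ⟨i, hi, hri⟩ : ∃ i ∈ S, r i ≠ 0 := by
    contrapose! hne
    exact Finset.sum_eq_zero fun i hi => by rw [hne i hi, zero_smul]
  simp only [map_sum, map_smul, smul_eq_mul]
  exact Finset.sum_pos' (fun j hj => mul_nonneg (hr j hj) (hf j hj).le)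
    ⟨i, hi, mul_pos ((hr i hi).lt_of_ne' hri) (hf i hi)⟩

lemma areaForm_eq_norm_mul_norm_mul_sin (x y : ℂ) :
    ω x y = ‖x‖ * ‖y‖ * Real.sin (y.arg - x.arg) := by
  rw [Complex.areaForm, Real.sin_sub]
  simp only [Complex.mul_im, Complex.conj_re, Complex.conj_im]
  rw [← Complex.norm_mul_cos_arg x, ← Complex.norm_mul_sin_arg x,
    ← Complex.norm_mul_cos_arg y, ← Complex.norm_mul_sin_arg y]
  ring

lemma areaForm_pos_of_arg_lt {x y : ℂ} (hx : x ≠ 0) (hy : y ≠ 0) (hlt : x.arg < y.arg)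
    (hlt' : y.arg < x.arg + Real.pi) : 0 < ω x y := by
  rw [areaForm_eq_norm_mul_norm_mul_sin]
  exact mul_pos (mul_pos (norm_pos_iff.2 hx) (norm_pos_iff.2 hy))
    (Real.sin_pos_of_pos_of_lt_pi (by linarith) (by linarith))

lemma areaForm_eq_zero_of_re_mul_eq_zero {z v v' : ℂ} (hz : z ≠ 0) (hv : (z * v).re = 0)
    (hv' : (z * v').re = 0) : ω v v' = 0 := by
  simp only [Complex.mul_re] at hv hv'
  simp only [Complex.areaForm, Complex.mul_im, Complex.conj_re, Complex.conj_im]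
  have hre : z.re * (v.re * v'.im + -v.im * v'.re) = 0 := by
    linear_combination v'.im * hv - v.im * hv'
  have him : z.im * (v.re * v'.im + -v.im * v'.re) = 0 := by
    linear_combination v'.re * hv - v.re * hv'
  by_contra h
  exact hz (Complex.ext ((mul_eq_zero.1 hre).resolve_right h)
    ((mul_eq_zero.1 him).resolve_right h))

def deletedCone {ι : Type*} (S : Finset ι) (u : ι → ℂ) : Set ℂ :=
  {w | w ≠ 0 ∧ ∃ r : ι → ℝ, (∀ j, 0 ≤ r j) ∧ w = ∑ j ∈ S, (r j : ℂ) * u j}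

lemma areaForm_pos_of_mem_deletedCone {ι : Type*} {S T : Finset ι} {u : ι → ℂ}
    (h : ∀ i ∈ S, ∀ j ∈ T, 0 < ω (u i) (u j)) {x y : ℂ} (hx : x ∈ deletedCone S u)
    (hy : y ∈ deletedCone T u) : 0 < ω x y := by
  obtain ⟨hx0, r, hr, rfl⟩ := hx
  obtain ⟨hy0, s, hs, rfl⟩ := hy
  simp only [← Complex.real_smul] at hx0 hy0 ⊢
  refine (ω _).pos_of_sum_smul_ne_zero (fun j _ => hs j) (fun j hj => ?_) hy0
  exact ((ω).flip (u j)).pos_of_sum_smul_ne_zero (fun i _ => hr i) (fun i hi => h i hi j hj) hx0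

theorem re_mul_neg_or_pos_of_areaForm_pos {A B : Set ℂ} (hAB : ∀ a ∈ A, ∀ b ∈ B, 0 < ω a b)
    {z : ℂ} (hz : z ≠ 0) :
    (∀ a ∈ A, (z * a).re < 0) ∨ (∀ a ∈ A, 0 < (z * a).re) ∨
      (∀ b ∈ B, (z * b).re < 0) ∨ (∀ b ∈ B, 0 < (z * b).re) := by
  by_contra! h
  obtain ⟨⟨a₁, ha₁, h₁⟩, ⟨a₂, ha₂, h₂⟩, ⟨b₁, hb₁, h₃⟩, ⟨b₂, hb₂, h₄⟩⟩ := h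
  let f : ℂ →ₗ[ℝ] ℝ := Complex.reLm ∘ₗ LinearMap.mulLeft ℝ z
  obtain ⟨v, hv, hfv⟩ := f.exists_mem_segment_eq_zero h₂ h₁
  obtain ⟨v', hv', hfv'⟩ := f.exists_mem_segment_eq_zero h₄ h₃
  have hvB : ∀ b ∈ B, 0 < ω v b := fun b hb =>
    ((ω).flip b).pos_of_mem_segment (hAB a₂ ha₂ b hb) (hAB a₁ ha₁ b hb) hv
  exact ((ω v).pos_of_mem_segment (hvB b₂ hb₂) (hvB b₁ hb₁) hv').ne'
    (areaForm_eq_zero_of_re_mul_eq_zero hz hfv hfv')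

theorem deleted_cone_in_halfplane_general (n₁ N : ℕ)
    (lam : Fin N → ℂ) (hne : ∀ j, lam j ≠ 0)
    (hwh : ∀ i j : Fin N, (i : ℕ) < n₁ → n₁ ≤ (j : ℕ) →
      0 ≤ (lam i).arg ∧ (lam i).arg < (lam j).arg ∧ (lam j).arg < Real.pi)
    (z : ℂ) (hz : z ≠ 0) :
    (∀ w : ℂ, w ≠ 0 →
      (∃ r : Fin N → ℝ, (∀ j, 0 ≤ r j) ∧
        w = ∑ j ∈ Finset.univ.filter (fun j : Fin N => (j : ℕ) < n₁), (r j : ℂ) * lam j) →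
      (z * w).re < 0) ∨
    (∀ w : ℂ, w ≠ 0 →
      (∃ r : Fin N → ℝ, (∀ j, 0 ≤ r j) ∧
        w = ∑ j ∈ Finset.univ.filter (fun j : Fin N => (j : ℕ) < n₁), (r j : ℂ) * lam j) →
      0 < (z * w).re) ∨
    (∀ w : ℂ, w ≠ 0 →
      (∃ s : Fin N → ℝ, (∀ j, 0 ≤ s j) ∧
        w = ∑ j ∈ Finset.univ.filter (fun j : Fin N => n₁ ≤ (j : ℕ)), (s j : ℂ) * lam j) →
      (z * w).re < 0) ∨
    (∀ w : ℂ, w ≠ 0 →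
      (∃ s : Fin N → ℝ, (∀ j, 0 ≤ s j) ∧
        w = ∑ j ∈ Finset.univ.filter (fun j : Fin N => n₁ ≤ (j : ℕ)), (s j : ℂ) * lam j) →
      0 < (z * w).re) := by
  have hgen : ∀ i ∈ Finset.univ.filter (fun j : Fin N => (j : ℕ) < n₁),
      ∀ j ∈ Finset.univ.filter (fun j : Fin N => n₁ ≤ (j : ℕ)), 0 < ω (lam i) (lam j) := by
    intro i hi j hj
    obtain ⟨h₀, hlt, hlt_pi⟩ :=
      hwh i j (Finset.mem_filter.1 hi).2 (Finset.mem_filter.1 hj).2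
    exact areaForm_pos_of_arg_lt (hne i) (hne j) hlt (by linarith)
  have key := re_mul_neg_or_pos_of_areaForm_pos
    (fun a ha b hb => areaForm_pos_of_mem_deletedCone hgen ha hb) hz
  simpa only [deletedCone, Set.mem_ofPred_eq, and_imp] using key

/-- Under weak hyperbolicity of type (n₁,n₂), for every nonzero z ∈ ℂ, at least
one of the deleted cones z·C₁° or z·C₂° lies entirely in the open left half-plane {Re < 0}
or entirely in the open right half-plane {Re > 0}. -/
theorem deleted_cone_in_halfplane (n₁ n₂ N : ℕ) (hN : N = n₁ + n₂)
    (hn₁ : 1 ≤ n₁) (hn₂ : 1 ≤ n₂)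
    (lam : Fin N → ℂ) (hne : ∀ j, lam j ≠ 0)
    (hwh : ∀ i j : Fin N, (i : ℕ) < n₁ → n₁ ≤ (j : ℕ) →
      0 ≤ (lam i).arg ∧ (lam i).arg < (lam j).arg ∧ (lam j).arg < Real.pi)
    (z : ℂ) (hz : z ≠ 0) :
    (∀ w : ℂ, w ≠ 0 →
      (∃ r : Fin N → ℝ, (∀ j, 0 ≤ r j) ∧
        w = ∑ j ∈ Finset.univ.filter (fun j : Fin N => (j : ℕ) < n₁), (r j : ℂ) * lam j) →
      (z * w).re < 0) ∨
    (∀ w : ℂ, w ≠ 0 →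
      (∃ r : Fin N → ℝ, (∀ j, 0 ≤ r j) ∧
        w = ∑ j ∈ Finset.univ.filter (fun j : Fin N => (j : ℕ) < n₁), (r j : ℂ) * lam j) →
      0 < (z * w).re) ∨
    (∀ w : ℂ, w ≠ 0 →
      (∃ s : Fin N → ℝ, (∀ j, 0 ≤ s j) ∧
        w = ∑ j ∈ Finset.univ.filter (fun j : Fin N => n₁ ≤ (j : ℕ)), (s j : ℂ) * lam j) →
      (z * w).re < 0) ∨
    (∀ w : ℂ, w ≠ 0 →
      (∃ s : Fin N → ℝ, (∀ j, 0 ≤ s j) ∧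
        w = ∑ j ∈ Finset.univ.filter (fun j : Fin N => n₁ ≤ (j : ℕ)), (s j : ℂ) * lam j) →
      0 < (z * w).re) :=
  deleted_cone_in_halfplane_general n₁ N lam hne hwh z hz
end

section
/- Suppose λ satisfies the weak hyperbolicity condition of type (n₁,n₂). If a ∈ ℂ is nonzero and there exist nonnegative reals r_j (j ≤ n₁), not all zero, and nonnegative reals s_j (n₁ < j ≤ N), not all zero, with Re(a·Σ_{j≤n₁} r_j λ_j) = 0 and Re(a·Σ_{j>n₁} s_j λ_j) = 0, then a contradiction follows; i.e., no such a, r, s exist. -/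
/-! If `Re(a S₁) = Re(a S₂) = 0` with `a ≠ 0`, then `S₁` and `S₂` lie on the same real line
`ℝ · (i / a)`, so `Im(conj S₁ · S₂) = 0`. On the other hand `conj S₁ · S₂` expands into the
nonnegative combination `∑ rᵢ sⱼ conj λᵢ λⱼ`, and `Im(conj λᵢ λⱼ) = |λᵢ| |λⱼ| sin(arg λⱼ - arg λᵢ) > 0`
because `0 < arg λⱼ - arg λᵢ < π`; with one `rᵢ sⱼ > 0` this forces `Im(conj S₁ · S₂) > 0`. -/

open Complex ComplexConjugate Finset

namespace Complex

theorem im_conj_mul_eq_norm_mul_norm_mul_sin (z w : ℂ) :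
    (conj z * w).im = ‖z‖ * ‖w‖ * Real.sin (w.arg - z.arg) := by
  rw [Real.sin_sub, mul_im, conj_re, conj_im, ← norm_mul_cos_arg z, ← norm_mul_sin_arg z,
    ← norm_mul_cos_arg w, ← norm_mul_sin_arg w]
  ring

theorem im_conj_mul_pos_of_arg_lt {z w : ℂ} (hz : z ≠ 0) (hw : w ≠ 0) (h : z.arg < w.arg)
    (h' : w.arg < z.arg + Real.pi) : 0 < (conj z * w).im := by
  rw [im_conj_mul_eq_norm_mul_norm_mul_sin]
  have hsin : 0 < Real.sin (w.arg - z.arg) := Real.sin_pos_of_pos_of_lt_pi (by linarith)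
    (by linarith)
  positivity

theorem im_conj_mul_eq_zero_of_re_mul_eq_zero {a z w : ℂ} (ha : a ≠ 0) (hz : (a * z).re = 0)
    (hw : (a * w).re = 0) : (conj z * w).im = 0 := by
  have hprod : conj (a * z) * (a * w) = (normSq a : ℂ) * (conj z * w) := by
    rw [map_mul, normSq_eq_conj_mul_self]
    ring
  have him : (conj (a * z) * (a * w)).im = 0 := by
    rw [mul_im, conj_re, conj_im, hz, hw]
    ring
  rw [hprod, im_ofReal_mul] at him
  exact (mul_eq_zero.mp him).resolve_left (normSq_pos.mpr ha).ne'

theorem im_conj_sum_mul_sum_pos {ι : Type*} {s t : Finset ι} {r q : ι → ℝ} {z : ι → ℂ}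
    (hr : ∀ i ∈ s, 0 ≤ r i) (hq : ∀ j ∈ t, 0 ≤ q j) (hr₀ : ∃ i ∈ s, r i ≠ 0)
    (hq₀ : ∃ j ∈ t, q j ≠ 0) (hz : ∀ i ∈ s, ∀ j ∈ t, 0 < (conj (z i) * z j).im) :
    0 < (conj (∑ i ∈ s, (r i : ℂ) * z i) * ∑ j ∈ t, (q j : ℂ) * z j).im := by
  have hterm : ∀ i j, (conj ((r i : ℂ) * z i) * ((q j : ℂ) * z j)).im
      = r i * q j * (conj (z i) * z j).im := fun i j => by
    rw [map_mul, conj_ofReal, ← im_ofReal_mul, ofReal_mul]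
    ring_nf
  obtain ⟨i₀, hi₀, hri₀⟩ := hr₀
  obtain ⟨j₀, hj₀, hqj₀⟩ := hq₀
  have hpos : 0 < r i₀ * q j₀ :=
    mul_pos ((hr i₀ hi₀).lt_of_ne' hri₀) ((hq j₀ hj₀).lt_of_ne' hqj₀)
  simp only [map_sum, sum_mul_sum, im_sum, hterm]
  refine sum_pos' (fun i hi => sum_nonneg fun j hj => ?_) ⟨i₀, hi₀, ?_⟩
  · exact mul_nonneg (mul_nonneg (hr i hi) (hq j hj)) (hz i hi j hj).le
  · refine sum_pos' (fun j hj => ?_) ⟨j₀, hj₀, mul_pos hpos (hz i₀ hi₀ j₀ hj₀)⟩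
    exact mul_nonneg (mul_nonneg (hr i₀ hi₀) (hq j hj)) (hz i₀ hi₀ j hj).le

end Complex

theorem no_common_imaginary_direction_general (n₁ N : ℕ)
    (lam : Fin N → ℂ) (hne : ∀ j, lam j ≠ 0)
    (hwh : ∀ i j : Fin N, (i : ℕ) < n₁ → n₁ ≤ (j : ℕ) →
      0 ≤ (lam i).arg ∧ (lam i).arg < (lam j).arg ∧ (lam j).arg < Real.pi)
    (a : ℂ) (ha : a ≠ 0)
    (r s : Fin N → ℝ) (hr : ∀ j, 0 ≤ r j) (hs : ∀ j, 0 ≤ s j)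
    (hrnz : ∃ j : Fin N, (j : ℕ) < n₁ ∧ r j ≠ 0)
    (hsnz : ∃ j : Fin N, n₁ ≤ (j : ℕ) ∧ s j ≠ 0)
    (h1 : (a * ∑ j ∈ Finset.univ.filter (fun j : Fin N => (j : ℕ) < n₁),
      (r j : ℂ) * lam j).re = 0)
    (h2 : (a * ∑ j ∈ Finset.univ.filter (fun j : Fin N => n₁ ≤ (j : ℕ)),
      (s j : ℂ) * lam j).re = 0) :
    False := by
  have hcross : ∀ i ∈ univ.filter (fun j : Fin N => (j : ℕ) < n₁),
      ∀ j ∈ univ.filter (fun j : Fin N => n₁ ≤ (j : ℕ)), 0 < (conj (lam i) * lam j).im := by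
    intro i hi j hj
    obtain ⟨harg_nonneg, harg_lt, harg_lt_pi⟩ := hwh i j (mem_filter.mp hi).2 (mem_filter.mp hj).2
    exact im_conj_mul_pos_of_arg_lt (hne i) (hne j) harg_lt (by linarith)
  obtain ⟨i₀, hi₀, hri₀⟩ := hrnz
  obtain ⟨j₀, hj₀, hsj₀⟩ := hsnz
  have hpos := im_conj_sum_mul_sum_pos (fun i _ => hr i) (fun j _ => hs j)
    ⟨i₀, mem_filter.mpr ⟨mem_univ _, hi₀⟩, hri₀⟩ ⟨j₀, mem_filter.mpr ⟨mem_univ _, hj₀⟩, hsj₀⟩ hcross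
  exact hpos.ne' (im_conj_mul_eq_zero_of_re_mul_eq_zero ha h1 h2)

/-- Under weak hyperbolicity of type (n₁,n₂), there is no nonzero a ∈ ℂ and
nonnegative reals r_j (j ≤ n₁), not all zero, and s_j (j > n₁), not all zero, with
Re(a·Σ_{j≤n₁} r_j λ_j) = 0 and Re(a·Σ_{j>n₁} s_j λ_j) = 0. -/
theorem no_common_imaginary_direction (n₁ n₂ N : ℕ) (hN : N = n₁ + n₂)
    (hn₁ : 1 ≤ n₁) (hn₂ : 1 ≤ n₂)
    (lam : Fin N → ℂ) (hne : ∀ j, lam j ≠ 0)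
    (hwh : ∀ i j : Fin N, (i : ℕ) < n₁ → n₁ ≤ (j : ℕ) →
      0 ≤ (lam i).arg ∧ (lam i).arg < (lam j).arg ∧ (lam j).arg < Real.pi)
    (a : ℂ) (ha : a ≠ 0)
    (r s : Fin N → ℝ) (hr : ∀ j, 0 ≤ r j) (hs : ∀ j, 0 ≤ s j)
    (hrnz : ∃ j : Fin N, (j : ℕ) < n₁ ∧ r j ≠ 0)
    (hsnz : ∃ j : Fin N, n₁ ≤ (j : ℕ) ∧ s j ≠ 0)
    (h1 : (a * ∑ j ∈ Finset.univ.filter (fun j : Fin N => (j : ℕ) < n₁),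
      (r j : ℂ) * lam j).re = 0)
    (h2 : (a * ∑ j ∈ Finset.univ.filter (fun j : Fin N => n₁ ≤ (j : ℕ)),
      (s j : ℂ) * lam j).re = 0) :
    False :=
  no_common_imaginary_direction_general n₁ N lam hne hwh a ha r s hr hs hrnz hsnz h1 h2
end

section
/- Let b ∈ ℂ^r satisfy the weak hyperbolicity condition of type (r₁,r₂), and let f(z) = Σ_{|m|>0} a_m z^m be a power series convergent on all of ℂ^r with zero constant term. Then φ(z) = Σ_{|m|>0} (a_m/(b·m)) z^m is also convergent on all of ℂ^r, and is the unique formal power series solution with zero constant term of the equation Σ_j b_j z_j ∂φ/∂z_j = f. -/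
/-!
Weak hyperbolicity puts every `b j` in the half-open half-plane `0 ≤ arg < π`, which is closed
under sums with positive integer weights. Quantitatively: if some `m j ≠ 0` with `Im (b j) > 0`,
then `Im (b·m) ≥ Im (b j)`; otherwise every `b j` with `m j ≠ 0` is a positive real and
`Re (b·m) ≥ Re (b j)`. Hence `|b·m| ≥ c > 0` for all `m ≠ 0`, so dividing the coefficients of `f`
by `b·m` preserves convergence everywhere, and `b·m ≠ 0` for `m ≠ 0` forces uniqueness.
-/

open Filter Topology

lemma exists_pos_forall_le_of_finite {ι : Type*} [Finite ι] {g : ι → ℝ} (hg : ∀ i, 0 < g i) :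
    ∃ c > 0, ∀ i, c ≤ g i := by
  have hsmall : ∀ᶠ c in 𝓝[>] (0 : ℝ), ∀ i, c ≤ g i :=
    eventually_all.2 fun i => (eventually_le_nhds (hg i)).filter_mono nhdsWithin_le_nhds
  obtain ⟨c, hc, hcpos⟩ := (hsmall.and self_mem_nhdsWithin).exists
  exact ⟨c, hcpos, hc⟩

lemma le_sum_natCast_mul {ι : Type*} [Fintype ι] {m : ι → ℕ} {x : ι → ℝ}
    (hx : ∀ i, m i ≠ 0 → 0 ≤ x i) {j : ι} (hj : m j ≠ 0) :
    x j ≤ ∑ i, (m i : ℝ) * x i := by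
  have hterm : ∀ i ∈ Finset.univ, 0 ≤ (m i : ℝ) * x i := fun i _ => by
    by_cases hi : m i = 0
    · simp [hi]
    · exact mul_nonneg (Nat.cast_nonneg _) (hx i hi)
  calc x j ≤ (m j : ℝ) * x j :=
        le_mul_of_one_le_left (hx j hj) (by exact_mod_cast Nat.one_le_iff_ne_zero.2 hj)
    _ ≤ ∑ i, (m i : ℝ) * x i := Finset.single_le_sum hterm (Finset.mem_univ j)

lemma im_nonneg_and_re_pos_of_arg_mem_Ico {w : ℂ} (hw : w ≠ 0) (h0 : 0 ≤ w.arg)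
    (hπ : w.arg < Real.pi) : 0 ≤ w.im ∧ (w.im = 0 → 0 < w.re) := by
  refine ⟨Complex.arg_nonneg_iff.1 h0, fun him => ?_⟩
  have hre : 0 ≤ w.re := (Complex.arg_lt_pi_iff.1 hπ).resolve_right (not_not.2 him)
  exact hre.lt_of_ne fun hre0 => hw (Complex.ext hre0.symm him)

lemma exists_pos_le_norm_sum_natCast_mul {ι : Type*} [Fintype ι] {b : ι → ℂ}
    (him : ∀ j, 0 ≤ (b j).im) (hre : ∀ j, (b j).im = 0 → 0 < (b j).re) :
    ∃ c > 0, ∀ m : ι → ℕ, m ≠ 0 → c ≤ ‖∑ j, (m j : ℂ) * b j‖ := by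
  obtain ⟨c, hcpos, hc⟩ := exists_pos_forall_le_of_finite
    (g := fun j => if (b j).im = 0 then (b j).re else (b j).im) fun j => by
      split_ifs with h
      exacts [hre j h, (him j).lt_of_ne' h]
  refine ⟨c, hcpos, fun m hm => ?_⟩
  obtain ⟨j, hj⟩ : ∃ j, m j ≠ 0 := Function.ne_iff.1 hm
  by_cases hcase : ∃ j, m j ≠ 0 ∧ (b j).im ≠ 0
  · obtain ⟨j, hjm, hjim⟩ := hcase
    calc c ≤ (b j).im := by simpa [hjim] using hc j
      _ ≤ ∑ i, (m i : ℝ) * (b i).im := le_sum_natCast_mul (fun i _ => him i) hjm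
      _ = (∑ i, (m i : ℂ) * b i).im := by simp [Complex.im_sum]
      _ ≤ ‖∑ i, (m i : ℂ) * b i‖ := Complex.im_le_norm _
  · push Not at hcase
    calc c ≤ (b j).re := by simpa [hcase j hj] using hc j
      _ ≤ ∑ i, (m i : ℝ) * (b i).re :=
          le_sum_natCast_mul (fun i hi => (hre i (hcase i hi)).le) hj
      _ = (∑ i, (m i : ℂ) * b i).re := by simp [Complex.re_sum]
      _ ≤ ‖∑ i, (m i : ℂ) * b i‖ := Complex.re_le_norm _

lemma summable_div_of_le_norm {M 𝕜 : Type*} [NormedField 𝕜] [CompleteSpace 𝕜] {f d : M → 𝕜}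
    {c : ℝ} (hc : 0 < c) (hf : Summable fun m => ‖f m‖) (hd : ∀ m, f m ≠ 0 → c ≤ ‖d m‖) :
    Summable fun m => f m / d m := by
  refine .of_norm_bounded (hf.div_const c) fun m => ?_
  by_cases hm : f m = 0
  · simp [hm]
  · rw [norm_div]
    exact div_le_div_of_nonneg_left (norm_nonneg _) hc (hd m hm)

/-- Let b ∈ ℂ^r satisfy weak hyperbolicity of type (r₁,r₂) and let
f(z) = Σ_{|m|>0} a_m z^m be a power series (given by its coefficients a, with zero
constant term) converging on all of ℂ^r. Then φ(z) = Σ (a_m/(b·m)) z^m also converges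
on all of ℂ^r, and its coefficient family is the unique formal solution with zero
constant term of Σ_j b_j z_j ∂φ/∂z_j = f (an equation which, on coefficients, reads
(b·m)·φ_m = a_m for all m). -/
theorem poincare_solution_of_euler_equation (r₁ r₂ r : ℕ) (hr : r = r₁ + r₂)
    (hr₁ : 1 ≤ r₁) (hr₂ : 1 ≤ r₂)
    (b : Fin r → ℂ) (hne : ∀ j, b j ≠ 0)
    (hwh : ∀ i j : Fin r, (i : ℕ) < r₁ → r₁ ≤ (j : ℕ) →
      0 ≤ (b i).arg ∧ (b i).arg < (b j).arg ∧ (b j).arg < Real.pi)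
    (a : (Fin r → ℕ) → ℂ) (ha0 : a 0 = 0)
    (hconv : ∀ z : Fin r → ℂ, Summable (fun m : Fin r → ℕ => a m * ∏ j, z j ^ m j)) :
    (∀ z : Fin r → ℂ,
      Summable (fun m : Fin r → ℕ =>
        (a m / ∑ j, (m j : ℂ) * b j) * ∏ j, z j ^ m j)) ∧
    (∀ m : Fin r → ℕ,
      (∑ j, (m j : ℂ) * b j) * (a m / ∑ j, (m j : ℂ) * b j) = a m) ∧
    (∀ ψ : (Fin r → ℕ) → ℂ, ψ 0 = 0 →
      (∀ m : Fin r → ℕ, (∑ j, (m j : ℂ) * b j) * ψ m = a m) →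
      ψ = fun m => a m / ∑ j, (m j : ℂ) * b j) := by
  have harg : ∀ j : Fin r, 0 ≤ (b j).arg ∧ (b j).arg < Real.pi := fun j => by
    by_cases hj : (j : ℕ) < r₁
    · obtain ⟨h0, hlt, hπ⟩ := hwh j ⟨r₁, by omega⟩ hj le_rfl
      exact ⟨h0, hlt.trans hπ⟩
    · obtain ⟨h0, hlt, hπ⟩ := hwh ⟨0, by omega⟩ j (by simp; omega) (not_lt.1 hj)
      exact ⟨h0.trans hlt.le, hπ⟩
  have hhalf j := im_nonneg_and_re_pos_of_arg_mem_Ico (hne j) (harg j).1 (harg j).2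
  obtain ⟨c, hc, hbound⟩ :=
    exists_pos_le_norm_sum_natCast_mul (fun j => (hhalf j).1) (fun j => (hhalf j).2)
  have hdiv_ne : ∀ m : Fin r → ℕ, m ≠ 0 → ∑ j, (m j : ℂ) * b j ≠ 0 := fun m hm h0 =>
    hc.not_ge (by simpa [h0] using hbound m hm)
  have hvanish : ∀ m : Fin r → ℕ, ∑ j, (m j : ℂ) * b j = 0 → a m = 0 := fun m h0 => by
    by_contra ham
    exact hdiv_ne m (fun hm => ham (hm ▸ ha0)) h0
  refine ⟨fun z => ?_, fun m => mul_div_cancel_of_imp' (hvanish m), fun ψ hψ0 hψ => ?_⟩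
  · simp_rw [div_mul_eq_mul_div]
    refine summable_div_of_le_norm hc (hconv z).norm fun m ham => hbound m ?_
    rintro rfl
    simp [ha0] at ham
  · funext m
    by_cases hm : m = 0
    · simp [hm, hψ0, ha0]
    · exact eq_div_of_mul_eq (hdiv_ne m hm) (by rw [mul_comm, hψ m])
end

section
/- Given a complex number z₀ ∈ ℂ with arg(λ_{μ}) bounded in [0,π) as in weak hyperbolicity, i.e., given finitely many complex numbers λ₁,…,λ_k all with 0 ≤ arg(λ_j) < π and λ_j ≠ 0, there are only finitely many tuples (c₁,…,c_k) of nonnegative integers such that Σ c_j λ_j = z₀. -/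
/-- Given finitely many nonzero complex numbers λ₁,…,λ_k all with
0 ≤ arg(λ_j) < π, and z₀ ∈ ℂ, there are only finitely many tuples (c₁,…,c_k) of
nonnegative integers with Σ c_j λ_j = z₀. -/
theorem finitely_many_nonneg_integer_solutions (k : ℕ) (lam : Fin k → ℂ)
    (hne : ∀ j, lam j ≠ 0)
    (harg : ∀ j, 0 ≤ (lam j).arg ∧ (lam j).arg < Real.pi)
    (z₀ : ℂ) :
    {c : Fin k → ℕ | ∑ j, (c j : ℂ) * lam j = z₀}.Finite := by
  -- Each λ_j satisfies either Im > 0, or Im = 0 and Re > 0.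
  have hsign : ∀ j, 0 < (lam j).im ∨ ((lam j).im = 0 ∧ 0 < (lam j).re) := by
    intro j
    have h1 : 0 ≤ (lam j).im := Complex.arg_nonneg_iff.mp (harg j).1
    rcases eq_or_lt_of_le h1 with h | h
    · right
      refine ⟨h.symm, ?_⟩
      have h2 := Complex.arg_lt_pi_iff.mp (harg j).2
      have hre : (lam j).re ≠ 0 := by
        intro h0
        exact hne j (Complex.ext h0 h.symm)
      rcases h2 with h2 | h2
      · exact lt_of_le_of_ne h2 (Ne.symm hre)
      · exact absurd h.symm h2
    · left; exact h
  -- Choose M so that L j := Re λ_j + M * Im λ_j > 0 for all j.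
  set M : ℝ := 1 + ∑ j, |(lam j).re| / (lam j).im with hM
  have hMterm : ∀ j, 0 ≤ |(lam j).re| / (lam j).im := by
    intro j
    rcases hsign j with h | ⟨h, _⟩
    · exact div_nonneg (abs_nonneg _) h.le
    · simp [h]
  have hMge : ∀ j, 1 + |(lam j).re| / (lam j).im ≤ M := by
    intro j
    have := Finset.single_le_sum (f := fun j => |(lam j).re| / (lam j).im)
      (fun i _ => hMterm i) (Finset.mem_univ j)
    linarith
  set L : Fin k → ℝ := fun j => (lam j).re + M * (lam j).im with hL
  have hLpos : ∀ j, 0 < L j := by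
    intro j
    rcases hsign j with h | ⟨h, h2⟩
    · have h1 : (1 + |(lam j).re| / (lam j).im) * (lam j).im ≤ M * (lam j).im :=
        mul_le_mul_of_nonneg_right (hMge j) h.le
      have h2 : (1 + |(lam j).re| / (lam j).im) * (lam j).im
          = (lam j).im + |(lam j).re| := by
        field_simp
      have h3 : -(lam j).re ≤ |(lam j).re| := neg_le_abs _
      rw [h2] at h1
      simp only [hL]
      linarith
    · simp only [hL, h]
      simpa using h2
  -- A real linear bound: for any solution c, ∑ c j * L j = Re z₀ + M * Im z₀.
  set B : ℝ := z₀.re + M * z₀.im with hB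
  have key : ∀ c : Fin k → ℕ, (∑ j, (c j : ℂ) * lam j = z₀) →
      ∑ j, (c j : ℝ) * L j = B := by
    intro c hc
    have hre : (∑ j, (c j : ℂ) * lam j).re = z₀.re := by rw [hc]
    have him : (∑ j, (c j : ℂ) * lam j).im = z₀.im := by rw [hc]
    rw [Complex.re_sum] at hre
    rw [Complex.im_sum] at him
    simp only [Complex.mul_re, Complex.mul_im, Complex.natCast_re,
      Complex.natCast_im, zero_mul, sub_zero, zero_add] at hre him
    simp only [hL, hB]
    rw [← hre, ← him]
    rw [Finset.mul_sum, ← Finset.sum_add_distrib]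
    congr 1
    ext j
    ring
  -- Hence each coordinate is bounded.
  set N : ℕ := Finset.univ.sup (fun j => ⌈B / L j⌉₊) with hN
  apply Set.Finite.subset (Set.finite_Iic (fun _ : Fin k => N))
  intro c hc
  have hsum := key c hc
  intro j
  show c j ≤ N
  have hterm : (c j : ℝ) * L j ≤ B := by
    rw [← hsum]
    apply Finset.single_le_sum (f := fun i => (c i : ℝ) * L i)
      (fun i _ => mul_nonneg (Nat.cast_nonneg _) (hLpos i).le) (Finset.mem_univ j)
  have hdiv : (c j : ℝ) ≤ B / L j := (le_div_iff₀ (hLpos j)).mpr hterm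
  have : (c j : ℝ) ≤ (⌈B / L j⌉₊ : ℝ) := hdiv.trans (Nat.le_ceil _)
  have h1 : c j ≤ ⌈B / L j⌉₊ := by exact_mod_cast this
  exact h1.trans (Finset.le_sup (f := fun i => ⌈B / L i⌉₊) (Finset.mem_univ j))
end
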